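/- For integers n, m ≥ 3, the F-index of the vertex T-join of the cycle C_n and the cycle C_m is F(C_n ∨̇_T C_m) = mn(m² + n²) + 6n²m + 12m²n + 60mn + 8m + 128n. -/

import Mathlib

/-- The subdivision graph `S(G)`: a new vertex is inserted into each edge of `G`
(each edge is replaced by a path of length 2). The inserted vertices form the
right summand `↥G.edgeSet`. -/
def Sgraph {V : Type*} (G : SimpleGraph V) : SimpleGraph (V ⊕ ↥G.edgeSet) where
  Adj x y :=
    match x, y with
    | Sum.inl v, Sum.inr e => v ∈ (e : Sym2 V)
    | Sum.inr e, Sum.inl v => v ∈ (e : Sym2 V)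
    | _, _ => False
  symm := by constructor; rintro (v | e) (w | f) h <;> exact h
  loopless := by constructor; rintro (v | e) h <;> exact h

/-- The graph `R(G)`: obtained from `G` by inserting a new vertex into each edge of `G`
and joining each new vertex to the end vertices of its corresponding edge. -/
def Rgraph {V : Type*} (G : SimpleGraph V) : SimpleGraph (V ⊕ ↥G.edgeSet) where
  Adj x y :=
    match x, y with
    | Sum.inl v, Sum.inl w => G.Adj v w
    | Sum.inl v, Sum.inr e => v ∈ (e : Sym2 V)
    | Sum.inr e, Sum.inl v => v ∈ (e : Sym2 V)
    | Sum.inr _, Sum.inr _ => False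
  symm := by
    constructor
    rintro (v | e) (w | f) h
    · exact G.adj_symm h
    · exact h
    · exact h
    · exact h
  loopless := by
    constructor
    rintro (v | e) h
    · exact G.irrefl h
    · exact h

/-- The graph `Q(G)`: obtained from `G` by inserting a new vertex into each edge of `G`,
then joining by edges those pairs of new vertices lying on adjacent edges of `G`. -/
def Qgraph {V : Type*} (G : SimpleGraph V) : SimpleGraph (V ⊕ ↥G.edgeSet) where
  Adj x y :=
    match x, y with
    | Sum.inl _, Sum.inl _ => False
    | Sum.inl v, Sum.inr e => v ∈ (e : Sym2 V)
    | Sum.inr e, Sum.inl v => v ∈ (e : Sym2 V)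
    | Sum.inr e, Sum.inr f => e ≠ f ∧ ∃ v, v ∈ (e : Sym2 V) ∧ v ∈ (f : Sym2 V)
  symm := by
    constructor
    rintro (v | e) (w | f) h
    · exact h
    · exact h
    · exact h
    · exact ⟨h.1.symm, by obtain ⟨v, h1, h2⟩ := h.2; exact ⟨v, h2, h1⟩⟩
  loopless := by
    constructor
    rintro (v | e) h
    · exact h
    · exact h.1 rfl

/-- The total graph `T(G)`: obtained from `G` by inserting a new vertex into each edge,
joining each new vertex to the end vertices of its corresponding edge, and joining by
edges those pairs of new vertices lying on adjacent edges of `G`. -/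
def Tgraph {V : Type*} (G : SimpleGraph V) : SimpleGraph (V ⊕ ↥G.edgeSet) where
  Adj x y :=
    match x, y with
    | Sum.inl v, Sum.inl w => G.Adj v w
    | Sum.inl v, Sum.inr e => v ∈ (e : Sym2 V)
    | Sum.inr e, Sum.inl v => v ∈ (e : Sym2 V)
    | Sum.inr e, Sum.inr f => e ≠ f ∧ ∃ v, v ∈ (e : Sym2 V) ∧ v ∈ (f : Sym2 V)
  symm := by
    constructor
    rintro (v | e) (w | f) h
    · exact G.adj_symm h
    · exact h
    · exact h
    · exact ⟨h.1.symm, by obtain ⟨v, h1, h2⟩ := h.2; exact ⟨v, h2, h1⟩⟩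
  loopless := by
    constructor
    rintro (v | e) h
    · exact G.irrefl h
    · exact h.1 rfl

/-- The disjoint union of `H` and `K` together with all edges joining a vertex `a` of `H`
with `P a` to every vertex of `K`. -/
def joinOn {A B : Type*} (H : SimpleGraph A) (K : SimpleGraph B) (P : A → Prop) :
    SimpleGraph (A ⊕ B) where
  Adj x y :=
    match x, y with
    | Sum.inl a, Sum.inl a' => H.Adj a a'
    | Sum.inr b, Sum.inr b' => K.Adj b b'
    | Sum.inl a, Sum.inr _ => P a
    | Sum.inr _, Sum.inl a => P a
  symm := by
    constructor
    rintro (a | b) (a' | b') h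
    · exact H.adj_symm h
    · exact h
    · exact h
    · exact K.adj_symm h
  loopless := by
    constructor
    rintro (a | b) h
    · exact H.irrefl h
    · exact K.irrefl h

/-- The vertex S-join `G₁ ∨̇_S G₂`: obtained from `S(G₁)` and `G₂` by joining each vertex
of `V(G₁)` to every vertex of `G₂`. -/
def vertexSJoin {V₁ V₂ : Type*} (G₁ : SimpleGraph V₁) (G₂ : SimpleGraph V₂) :
    SimpleGraph ((V₁ ⊕ ↥G₁.edgeSet) ⊕ V₂) :=
  joinOn (Sgraph G₁) G₂ (fun x => x.isLeft)

/-- The edge S-join `G₁ ∨̱_S G₂`: obtained from `S(G₁)` and `G₂` by joining each inserted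
vertex (each vertex of `I(G₁)`) to every vertex of `G₂`. -/
def edgeSJoin {V₁ V₂ : Type*} (G₁ : SimpleGraph V₁) (G₂ : SimpleGraph V₂) :
    SimpleGraph ((V₁ ⊕ ↥G₁.edgeSet) ⊕ V₂) :=
  joinOn (Sgraph G₁) G₂ (fun x => x.isRight)

/-- The vertex R-join `G₁ ∨̇_R G₂`. -/
def vertexRJoin {V₁ V₂ : Type*} (G₁ : SimpleGraph V₁) (G₂ : SimpleGraph V₂) :
    SimpleGraph ((V₁ ⊕ ↥G₁.edgeSet) ⊕ V₂) :=
  joinOn (Rgraph G₁) G₂ (fun x => x.isLeft)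

/-- The edge R-join `G₁ ∨̱_R G₂`. -/
def edgeRJoin {V₁ V₂ : Type*} (G₁ : SimpleGraph V₁) (G₂ : SimpleGraph V₂) :
    SimpleGraph ((V₁ ⊕ ↥G₁.edgeSet) ⊕ V₂) :=
  joinOn (Rgraph G₁) G₂ (fun x => x.isRight)

/-- The vertex Q-join `G₁ ∨̇_Q G₂`. -/
def vertexQJoin {V₁ V₂ : Type*} (G₁ : SimpleGraph V₁) (G₂ : SimpleGraph V₂) :
    SimpleGraph ((V₁ ⊕ ↥G₁.edgeSet) ⊕ V₂) :=
  joinOn (Qgraph G₁) G₂ (fun x => x.isLeft)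

/-- The edge Q-join `G₁ ∨̱_Q G₂`. -/
def edgeQJoin {V₁ V₂ : Type*} (G₁ : SimpleGraph V₁) (G₂ : SimpleGraph V₂) :
    SimpleGraph ((V₁ ⊕ ↥G₁.edgeSet) ⊕ V₂) :=
  joinOn (Qgraph G₁) G₂ (fun x => x.isRight)

/-- The vertex T-join `G₁ ∨̇_T G₂`. -/
def vertexTJoin {V₁ V₂ : Type*} (G₁ : SimpleGraph V₁) (G₂ : SimpleGraph V₂) :
    SimpleGraph ((V₁ ⊕ ↥G₁.edgeSet) ⊕ V₂) :=
  joinOn (Tgraph G₁) G₂ (fun x => x.isLeft)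

/-- The edge T-join `G₁ ∨̱_T G₂`. -/
def edgeTJoin {V₁ V₂ : Type*} (G₁ : SimpleGraph V₁) (G₂ : SimpleGraph V₂) :
    SimpleGraph ((V₁ ⊕ ↥G₁.edgeSet) ⊕ V₂) :=
  joinOn (Tgraph G₁) G₂ (fun x => x.isRight)

/-- Degree of a vertex in a graph on a finite vertex type. -/
noncomputable def gdeg {V : Type*} [Finite V] (G : SimpleGraph V) (v : V) : ℕ :=
  haveI : Fintype ↥(G.neighborSet v) := Fintype.ofFinite _
  G.degree v

/-- The forgotten topological index (F-index): `F(G) = ∑_{v ∈ V(G)} d_G(v)³`. -/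
noncomputable def Findex {V : Type*} [Finite V] (G : SimpleGraph V) : ℕ :=
  haveI := Fintype.ofFinite V
  ∑ v : V, gdeg G v ^ 3

/-- The first Zagreb index: `M₁(G) = ∑_{v ∈ V(G)} d_G(v)²`. -/
noncomputable def M1 {V : Type*} [Finite V] (G : SimpleGraph V) : ℕ :=
  haveI := Fintype.ofFinite V
  ∑ v : V, gdeg G v ^ 2

/-- `M₄(G) = ∑_{v ∈ V(G)} d_G(v)⁴`. -/
noncomputable def M4 {V : Type*} [Finite V] (G : SimpleGraph V) : ℕ :=
  haveI := Fintype.ofFinite V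
  ∑ v : V, gdeg G v ^ 4

/-- The hyper Zagreb index: `HM(G) = ∑_{uv ∈ E(G)} (d_G(u) + d_G(v))²`. -/
noncomputable def HM {V : Type*} [Finite V] (G : SimpleGraph V) : ℕ :=
  haveI : Fintype ↥G.edgeSet := Fintype.ofFinite _
  ∑ e : ↥G.edgeSet,
    Sym2.lift ⟨fun u v => (gdeg G u + gdeg G v) ^ 2,
      fun u v => by dsimp only; rw [add_comm]⟩ (e : Sym2 V)

/-- The redefined Zagreb index:
`ReZM(G) = ∑_{uv ∈ E(G)} d_G(u) d_G(v) (d_G(u) + d_G(v))`. -/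
noncomputable def ReZM {V : Type*} [Finite V] (G : SimpleGraph V) : ℕ :=
  haveI : Fintype ↥G.edgeSet := Fintype.ofFinite _
  ∑ e : ↥G.edgeSet,
    Sym2.lift ⟨fun u v => gdeg G u * gdeg G v * (gdeg G u + gdeg G v),
      fun u v => by dsimp only; ring⟩ (e : Sym2 V)

/-- The number of edges of `G`. -/
noncomputable def numEdges {V : Type*} (G : SimpleGraph V) : ℕ :=
  Nat.card ↥G.edgeSet

/-!
In `T(G₁) ∨̇_T G₂` a vertex `v` of `G₁` has degree `2 d(v) + |V₂|`, the vertex inserted into an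
edge `uw` has degree `d(u) + d(w)`, and a vertex `b` of `G₂` has degree `d(b) + |V₁|`. For
`C_n` and `C_m` these are `m + 4`, `4` and `n + 2`, taken by `n`, `n` and `m` vertices, so
`F = n (m + 4)³ + 64 n + m (n + 2)³`, which expands to the stated polynomial.
-/

open SimpleGraph

section Degree

variable {V : Type*} (G : SimpleGraph V)

lemma gdeg_eq_natCard_neighborSet [Finite V] (v : V) :
    gdeg G v = Nat.card (G.neighborSet v) := by
  let _ := Fintype.ofFinite (G.neighborSet v)
  exact (Nat.card_eq_fintype_card.trans (card_neighborSet_eq_degree G v)).symm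

lemma gdeg_eq_degree [Fintype V] [DecidableRel G.Adj] (v : V) : gdeg G v = G.degree v := by
  rw [gdeg_eq_natCard_neighborSet, Nat.card_eq_fintype_card, card_neighborSet_eq_degree]

lemma natCard_incident_edges [Finite V] (v : V) :
    Nat.card {e : G.edgeSet // v ∈ (e : Sym2 V)} = gdeg G v := by
  classical
  rw [gdeg_eq_natCard_neighborSet, ← Nat.card_congr (G.incidenceSetEquivNeighborSet v)]
  exact Nat.card_congr ⟨fun e => ⟨e.1.1, e.1.2, e.2⟩, fun e => ⟨⟨e.1, e.2.1⟩, e.2.2⟩,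
    fun _ => rfl, fun _ => rfl⟩

lemma sum_gdeg_eq_two_mul_natCard_edgeSet [Fintype V] :
    ∑ v, gdeg G v = 2 * Nat.card G.edgeSet := by
  classical
  simp only [gdeg_eq_degree, sum_degrees_eq_twice_card_edges, edgeFinset_card,
    Nat.card_eq_fintype_card]

lemma Findex_eq_sum [Fintype V] : Findex G = ∑ v, gdeg G v ^ 3 := by
  unfold Findex
  congr!

end Degree

lemma gdeg_cycleGraph {n : ℕ} (hn : 3 ≤ n) (v : Fin n) : gdeg (cycleGraph n) v = 2 := by
  obtain ⟨k, rfl⟩ : ∃ k, n = k + 3 := ⟨n - 3, by omega⟩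
  rw [gdeg_eq_degree]
  exact cycleGraph_degree_three_le

lemma natCard_edgeSet_cycleGraph {n : ℕ} (hn : 3 ≤ n) : Nat.card (cycleGraph n).edgeSet = n := by
  have h := sum_gdeg_eq_two_mul_natCard_edgeSet (cycleGraph n)
  simp only [gdeg_cycleGraph hn, Finset.sum_const, Finset.card_univ, Fintype.card_fin,
    smul_eq_mul] at h
  omega

section JoinOn

variable {A B : Type*} [Finite A] [Finite B] (H : SimpleGraph A) (K : SimpleGraph B)
  {P : A → Prop}

lemma gdeg_joinOn_inl_of_pos {a : A} (ha : P a) :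
    gdeg (joinOn H K P) (.inl a) = gdeg H a + Nat.card B := by
  rw [gdeg_eq_natCard_neighborSet, gdeg_eq_natCard_neighborSet, ← Nat.card_sum]
  exact Nat.card_congr (Equiv.subtypeSum.trans
    (Equiv.sumCongr (Equiv.refl _) (Equiv.subtypeUnivEquiv fun _ => ha)))

lemma gdeg_joinOn_inl_of_neg {a : A} (ha : ¬P a) :
    gdeg (joinOn H K P) (.inl a) = gdeg H a := by
  have : IsEmpty {b : B // P a} := ⟨fun b => ha b.2⟩
  rw [gdeg_eq_natCard_neighborSet, gdeg_eq_natCard_neighborSet,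
    ← add_zero (Nat.card (H.neighborSet a)), ← Nat.card_of_isEmpty (α := {b : B // P a}),
    ← Nat.card_sum]
  exact Nat.card_congr Equiv.subtypeSum

lemma gdeg_joinOn_inr (b : B) :
    gdeg (joinOn H K P) (.inr b) = gdeg K b + Nat.card {a // P a} := by
  rw [gdeg_eq_natCard_neighborSet, gdeg_eq_natCard_neighborSet, add_comm, ← Nat.card_sum]
  exact Nat.card_congr Equiv.subtypeSum

end JoinOn

section Total

variable {V : Type*} [Finite V] (G : SimpleGraph V)

lemma gdeg_Tgraph_inl (v : V) : gdeg (Tgraph G) (.inl v) = 2 * gdeg G v := by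
  have hsplit : Nat.card ((Tgraph G).neighborSet (.inl v)) =
      Nat.card (G.neighborSet v) + Nat.card {e : G.edgeSet // v ∈ (e : Sym2 V)} := by
    rw [← Nat.card_sum]
    exact Nat.card_congr Equiv.subtypeSum
  rw [gdeg_eq_natCard_neighborSet, hsplit, natCard_incident_edges,
    ← gdeg_eq_natCard_neighborSet, two_mul]

lemma natCard_adjacent_edges_add_two {u w : V} (h : s(u, w) ∈ G.edgeSet) :
    Nat.card {f : G.edgeSet // (⟨s(u, w), h⟩ : G.edgeSet) ≠ f ∧
      ∃ x, x ∈ s(u, w) ∧ x ∈ (f : Sym2 V)} + 2 = gdeg G u + gdeg G w := by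
  set e : G.edgeSet := ⟨s(u, w), h⟩
  -- inclusion–exclusion: `e` is the only edge incident to both `u` and `w`
  let I : V → Set G.edgeSet := fun x => {f | x ∈ (f : Sym2 V)}
  have hI : ∀ x, (I x).ncard = gdeg G x := fun x => by
    rw [← Nat.card_coe_set_eq]
    exact natCard_incident_edges G x
  have hinter : I u ∩ I w = {e} := by
    ext f
    simp only [I, e, Set.mem_inter_iff, Set.mem_ofPred_eq, Set.mem_singleton_iff,
      Sym2.mem_and_mem_iff (G.mem_edgeSet.mp h).ne, Subtype.ext_iff]
  have hadj : {f | e ≠ f ∧ ∃ x, x ∈ s(u, w) ∧ x ∈ (f : Sym2 V)} = (I u ∪ I w) \ {e} := by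
    ext f
    simp only [I, Set.mem_ofPred_eq, Set.mem_sdiff, Set.mem_union, Set.mem_singleton_iff,
      Sym2.mem_iff, exists_eq_or_imp, exists_eq_left]
    tauto
  have he : e ∈ I u ∪ I w := Or.inl (Sym2.mem_mk_left u w)
  have hunion := Set.ncard_union_add_ncard_inter (I u) (I w)
  rw [hinter, Set.ncard_singleton, hI, hI] at hunion
  have hpos : 0 < (I u ∪ I w).ncard := (Set.ncard_pos (Set.toFinite _)).mpr ⟨e, he⟩
  change Nat.card ↥{f : G.edgeSet | e ≠ f ∧ ∃ x, x ∈ s(u, w) ∧ x ∈ (f : Sym2 V)} + 2 = _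
  rw [Nat.card_coe_set_eq, hadj, Set.ncard_sdiff_singleton_of_mem he]
  omega

lemma gdeg_Tgraph_inr {u w : V} (h : s(u, w) ∈ G.edgeSet) :
    gdeg (Tgraph G) (.inr ⟨s(u, w), h⟩) = gdeg G u + gdeg G w := by
  have hends : Nat.card {x : V // x ∈ s(u, w)} = 2 := by
    change Nat.card ↥{x : V | x ∈ s(u, w)} = 2
    rw [Nat.card_coe_set_eq, ← Set.ncard_pair (G.mem_edgeSet.mp h).ne]
    congr 1
    ext x
    simp [Sym2.mem_iff]
  rw [← natCard_adjacent_edges_add_two G h, gdeg_eq_natCard_neighborSet, ← hends, add_comm,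
    ← Nat.card_sum]
  exact Nat.card_congr Equiv.subtypeSum

end Total

section VertexTJoin

variable {V₁ V₂ : Type*} [Finite V₁] [Finite V₂] (G₁ : SimpleGraph V₁) (G₂ : SimpleGraph V₂)

lemma gdeg_vertexTJoin_inl_inl (v : V₁) :
    gdeg (vertexTJoin G₁ G₂) (.inl (.inl v)) = 2 * gdeg G₁ v + Nat.card V₂ := by
  rw [vertexTJoin, gdeg_joinOn_inl_of_pos (P := fun x : V₁ ⊕ G₁.edgeSet => x.isLeft) _ _ rfl, gdeg_Tgraph_inl]

lemma gdeg_vertexTJoin_inl_inr {u w : V₁} (h : s(u, w) ∈ G₁.edgeSet) :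
    gdeg (vertexTJoin G₁ G₂) (.inl (.inr ⟨s(u, w), h⟩)) = gdeg G₁ u + gdeg G₁ w := by
  rw [vertexTJoin, gdeg_joinOn_inl_of_neg (P := fun x : V₁ ⊕ G₁.edgeSet => x.isLeft) _ _ (by simp), gdeg_Tgraph_inr]

lemma gdeg_vertexTJoin_inr (b : V₂) :
    gdeg (vertexTJoin G₁ G₂) (.inr b) = gdeg G₂ b + Nat.card V₁ := by
  rw [vertexTJoin, gdeg_joinOn_inr, Nat.card_congr Equiv.sumIsLeft]

theorem Findex_vertexTJoin_of_regular {r s : ℕ} (h₁ : ∀ v, gdeg G₁ v = r)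
    (h₂ : ∀ b, gdeg G₂ b = s) :
    Findex (vertexTJoin G₁ G₂) = Nat.card V₁ * (2 * r + Nat.card V₂) ^ 3 +
      Nat.card G₁.edgeSet * (2 * r) ^ 3 + Nat.card V₂ * (s + Nat.card V₁) ^ 3 := by
  have := Fintype.ofFinite V₁
  have := Fintype.ofFinite V₂
  have := Fintype.ofFinite G₁.edgeSet
  have hedge : ∀ e : G₁.edgeSet, gdeg (vertexTJoin G₁ G₂) (.inl (.inr e)) = 2 * r := by
    rintro ⟨e, he⟩
    induction e using Sym2.ind with
    | _ u w => rw [gdeg_vertexTJoin_inl_inr G₁ G₂ he, h₁, h₁, two_mul]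
  simp only [Findex_eq_sum, Fintype.sum_sum_type, gdeg_vertexTJoin_inl_inl,
    gdeg_vertexTJoin_inr, hedge, h₁, h₂, Finset.sum_const, Finset.card_univ, smul_eq_mul,
    Nat.card_eq_fintype_card]

end VertexTJoin

theorem Findex_vertexTJoin_ex18 (n m : ℕ) (hn : 3 ≤ n) (hm : 3 ≤ m) :
    (Findex (vertexTJoin (SimpleGraph.cycleGraph n) (SimpleGraph.cycleGraph m)) : ℤ) =
      (m : ℤ) * (n : ℤ) * ((m : ℤ) ^ 2 + (n : ℤ) ^ 2) + 6 * (n : ℤ) ^ 2 * (m : ℤ) + 12 * (m : ℤ) ^ 2 * (n : ℤ) + 60 * (m : ℤ) * (n : ℤ) + 8 * (m : ℤ) + 128 * (n : ℤ) := by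
  have h := Findex_vertexTJoin_of_regular (cycleGraph n) (cycleGraph m)
    (gdeg_cycleGraph hn) (gdeg_cycleGraph hm)
  rw [natCard_edgeSet_cycleGraph hn, Nat.card_fin, Nat.card_fin] at h
  rw [h]
  push_cast
  ring
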